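/- arXiv:2309.17270 — 4 statements merged into one kernel-verified Lean document; each statement's English description precedes it below -/
import Mathlib

section
/- Consider the personalized PageRank equation x = αPx + (1-α)e_r, where P ∈ ℝ^{N×N} is column-stochastic with at most q ≥ 2 nonzero entries per column, α ∈ (0,1), and e_r is a standard basis vector. Let x↓ be the decreasing rearrangement of x. Then for all 1 ≤ i ≤ N, ∑_{j ≥ i} x↓_j ≤ α^{-1} i^{-log_q(1/α)}. -/
/-!
Unrolling `x = α P x + (1 - α) e_r` `T` times gives
`x = (1 - α) ∑_{s < T} α^s P^s e_r + α^T P^T x`. Each application of `P` multiplies the number of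
nonzero entries by at most `q`, so the first term is supported on a set `A` of at most
`∑_{s < T} q^s < q^T` coordinates, while the second is a nonnegative vector of mass `α^T`.
Any `i ≥ |A|` largest entries of `x` therefore carry at least as much mass as `A`, so the tail
beyond them is at most `α^T`. Taking `T = ⌊log_q (i + 1)⌋` gives
`α^T ≤ α⁻¹ (i + 1)^(-log_q (1/α))`.
-/

open Matrix Finset

namespace Matrix

section Semiring

variable {n R : Type*} [Fintype n] [DecidableEq n]

theorem card_support_mulVec_le [NonUnitalNonAssocSemiring R] [DecidableEq R] {q : ℕ}
    {M : Matrix n n R} (hM : ∀ j, #{i | M i j ≠ 0} ≤ q) (v : n → R) :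
    #{i | (M *ᵥ v) i ≠ 0} ≤ q * #{j | v j ≠ 0} := by
  have hsub : ({i | (M *ᵥ v) i ≠ 0} : Finset n) ⊆
      ({j | v j ≠ 0} : Finset n).biUnion fun j => {i | M i j ≠ 0} := by
    intro i hi
    obtain ⟨j, -, hj⟩ := exists_ne_zero_of_sum_ne_zero (mem_filter.1 hi).2
    simp only [mem_biUnion, mem_filter, mem_univ, true_and]
    exact ⟨j, right_ne_zero_of_mul hj, left_ne_zero_of_mul hj⟩
  calc #{i | (M *ᵥ v) i ≠ 0}
      ≤ ∑ j ∈ {j | v j ≠ 0}, #{i | M i j ≠ 0} := (card_le_card hsub).trans card_biUnion_le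
    _ ≤ #{j | v j ≠ 0} * q := sum_le_card_nsmul _ _ _ fun j _ => hM j
    _ = q * #{j | v j ≠ 0} := mul_comm _ _

theorem card_support_pow_mulVec_le [Semiring R] [DecidableEq R] {q : ℕ} {M : Matrix n n R}
    (hM : ∀ j, #{i | M i j ≠ 0} ≤ q) (v : n → R) (s : ℕ) :
    #{i | (M ^ s *ᵥ v) i ≠ 0} ≤ q ^ s * #{j | v j ≠ 0} := by
  induction s with
  | zero => simp
  | succ s ih =>
    rw [pow_succ' M, ← mulVec_mulVec, pow_succ' q, mul_assoc]
    exact (card_support_mulVec_le hM _).trans (Nat.mul_le_mul_left q ih)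

theorem eq_sum_pow_mulVec_add_of_eq_smul_mulVec_add [CommSemiring R] {M : Matrix n n R} {α : R}
    {x b : n → R} (hx : x = α • (M *ᵥ x) + b) (T : ℕ) :
    x = ∑ s ∈ range T, α ^ s • (M ^ s *ᵥ b) + α ^ T • (M ^ T *ᵥ x) := by
  induction T with
  | zero => simp
  | succ T ih =>
    have hstep : M ^ T *ᵥ x = α • (M ^ (T + 1) *ᵥ x) + M ^ T *ᵥ b := by
      conv_lhs => rw [hx]
      rw [mulVec_add, mulVec_smul, mulVec_mulVec, ← pow_succ]
    conv_lhs => rw [ih, hstep]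
    rw [sum_range_succ, smul_add, pow_succ α T, mul_smul]
    abel

end Semiring

section OrderedRing

variable {n R : Type*} [Fintype n] [DecidableEq n] [CommRing R] [LinearOrder R]
  [IsStrictOrderedRing R] {M : Matrix n n R} {α : R} {x b : n → R}

theorem sum_eq_of_eq_smul_mulVec_add (hM : M ∈ colStochastic R n) (hx : x = α • (M *ᵥ x) + b) :
    (1 - α) * ∑ i, x i = ∑ i, b i := by
  have hsum := congrArg (fun v : n → R => ∑ i, v i) hx
  simp only [Pi.add_apply, Pi.smul_apply, smul_eq_mul, sum_add_distrib, ← mul_sum,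
    sum_mulVec_of_mem_colStochastic hM] at hsum
  linear_combination hsum

-- The negative part `y = x ⊓ 0` satisfies `α • M *ᵥ y ≤ y`; as `M` preserves sums, this forces
-- `(1 - α) * ∑ y ≥ 0`, so `y = 0`.
theorem nonneg_of_eq_smul_mulVec_add (hM : M ∈ colStochastic R n) (hα0 : 0 ≤ α) (hα1 : α < 1)
    (hb : 0 ≤ b) (hx : x = α • (M *ᵥ x) + b) : 0 ≤ x := by
  set y := x ⊓ 0
  have hMy_le : ∀ k, (M *ᵥ y) k ≤ (M *ᵥ x) k := fun k => by
    simpa [mulVec_sub] using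
      nonneg_mulVec_of_mem_colStochastic hM (x := x - y) (fun j => by simp [y]) k
  have hMy_nonpos : ∀ k, (M *ᵥ y) k ≤ 0 := fun k => by
    simpa [mulVec_neg] using
      nonneg_mulVec_of_mem_colStochastic hM (x := -y) (fun j => by simp [y]) k
  have hy : ∀ k, α * (M *ᵥ y) k ≤ y k := fun k => by
    have hxk : x k = α * (M *ᵥ x) k + b k := by simpa using congrFun hx k
    have hbk : 0 ≤ b k := hb k
    exact le_inf (by linarith [mul_le_mul_of_nonneg_left (hMy_le k) hα0])
      (mul_nonpos_of_nonneg_of_nonpos hα0 (hMy_nonpos k))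
  have hy_nonpos : ∀ k ∈ univ, y k ≤ 0 := fun k _ => inf_le_right
  have hsum_nonneg : 0 ≤ ∑ k, y k := by
    have := sum_le_sum fun k (_ : k ∈ univ) => hy k
    rw [← mul_sum, sum_mulVec_of_mem_colStochastic hM] at this
    exact nonneg_of_mul_nonneg_right (by linarith) (sub_pos.2 hα1)
  have hy_zero := (sum_eq_zero_iff_of_nonpos hy_nonpos).1
    (le_antisymm (sum_nonpos hy_nonpos) hsum_nonneg)
  intro k
  simpa [y] using hy_zero k (mem_univ k)

theorem exists_card_le_sum_compl_le_of_eq_smul_mulVec_add (hM : M ∈ colStochastic R n) {q : ℕ}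
    (hsparse : ∀ j, #{i | M i j ≠ 0} ≤ q) (hα0 : 0 ≤ α) (hx0 : 0 ≤ x)
    (hx : x = α • (M *ᵥ x) + b) (T : ℕ) :
    ∃ A : Finset n, #A ≤ (∑ s ∈ range T, q ^ s) * #{j | b j ≠ 0} ∧
      ∑ k ∈ Aᶜ, x k ≤ α ^ T * ∑ k, x k := by
  have hunroll := eq_sum_pow_mulVec_add_of_eq_smul_mulVec_add hx T
  set u := ∑ s ∈ range T, α ^ s • (M ^ s *ᵥ b) with hu
  refine ⟨({k | u k ≠ 0} : Finset n), ?_, ?_⟩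
  · have hsub : ({k | u k ≠ 0} : Finset n) ⊆
        (range T).biUnion fun s => {k | (M ^ s *ᵥ b) k ≠ 0} := by
      intro k hk
      obtain ⟨s, hs, hsk⟩ := exists_ne_zero_of_sum_ne_zero (by simpa [hu] using hk)
      simp only [mem_biUnion, mem_filter, mem_univ, true_and]
      exact ⟨s, hs, right_ne_zero_of_mul hsk⟩
    calc #{k | u k ≠ 0} ≤ ∑ s ∈ range T, #{k | (M ^ s *ᵥ b) k ≠ 0} :=
          (card_le_card hsub).trans card_biUnion_le
      _ ≤ ∑ s ∈ range T, q ^ s * #{j | b j ≠ 0} :=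
          sum_le_sum fun s _ => card_support_pow_mulVec_le hsparse b s
      _ = (∑ s ∈ range T, q ^ s) * #{j | b j ≠ 0} := (sum_mul ..).symm
  · have hoff : ∀ k ∈ ({k | u k ≠ 0} : Finset n)ᶜ, x k = α ^ T * (M ^ T *ᵥ x) k := by
      intro k hk
      simp only [mem_compl, mem_filter, mem_univ, true_and, not_not] at hk
      simpa [hk] using congrFun hunroll k
    rw [sum_congr rfl hoff, ← mul_sum, ← sum_mulVec_of_mem_colStochastic (pow_mem hM T)]
    have hMx := nonneg_mulVec_of_mem_colStochastic (pow_mem hM T) hx0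
    exact mul_le_mul_of_nonneg_left (sum_le_univ_sum_of_nonneg hMx) (pow_nonneg hα0 T)

end OrderedRing

end Matrix

theorem Finset.sum_le_sum_of_card_le_of_le_of_le {ι M : Type*} [AddCommMonoid M] [PartialOrder M]
    [IsOrderedAddMonoid M] [DecidableEq ι] {s t : Finset ι} {f : ι → M}
    {c : M} (hc : 0 ≤ c) (hst : #s ≤ #t) (hs : ∀ i ∈ s \ t, f i ≤ c) (ht : ∀ i ∈ t, c ≤ f i) :
    ∑ i ∈ s, f i ≤ ∑ i ∈ t, f i := by
  calc ∑ i ∈ s, f i = ∑ i ∈ s ∩ t, f i + ∑ i ∈ s \ t, f i := (sum_inter_add_sum_sdiff ..).symm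
    _ ≤ ∑ i ∈ s ∩ t, f i + #(s \ t) • c := add_le_add_right (sum_le_card_nsmul _ _ _ hs) _
    _ ≤ ∑ i ∈ s ∩ t, f i + #(t \ s) • c :=
        add_le_add_right (nsmul_le_nsmul_left hc (card_sdiff_le_card_sdiff_iff.2 hst)) _
    _ ≤ ∑ i ∈ t ∩ s, f i + ∑ i ∈ t \ s, f i := by
        rw [inter_comm]
        exact add_le_add_right (card_nsmul_le_sum _ _ _ fun i hi => ht i (mem_sdiff.1 hi).1) _
    _ = ∑ i ∈ t, f i := sum_inter_add_sum_sdiff ..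

theorem Finset.sum_filter_le_le_sum_compl_of_antitone {ι G : Type*} [Fintype ι] [LinearOrder ι]
    [AddCommGroup G] [PartialOrder G] [IsOrderedAddMonoid G] {x : ι → G} (hx0 : 0 ≤ x)
    {σ : Equiv.Perm ι} (hσ : Antitone (x ∘ σ)) {A : Finset ι} {i : ι} (hA : #A ≤ #{j | j < i}) :
    ∑ j ∈ {j | i ≤ j}, x (σ j) ≤ ∑ k ∈ Aᶜ, x k := by
  have hhead : ∑ k ∈ A, x k ≤ ∑ j ∈ {j | j < i}, x (σ j) := by
    calc ∑ k ∈ A, x k = ∑ j ∈ A.map σ.symm.toEmbedding, x (σ j) := by simp [sum_map]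
      _ ≤ ∑ j ∈ {j | j < i}, x (σ j) := by
        refine sum_le_sum_of_card_le_of_le_of_le (hx0 (σ i)) (by simpa using hA) ?_ ?_
        · intro j hj
          exact hσ (by simpa using (mem_sdiff.1 hj).2)
        · intro j hj
          exact hσ (mem_filter.1 hj).2.le
  have htotal : ∑ j ∈ {j | i ≤ j}, x (σ j) + ∑ j ∈ {j | j < i}, x (σ j) = ∑ k, x k := by
    rw [← Equiv.sum_comp σ x]
    simpa [not_le] using sum_filter_add_sum_filter_not univ (fun j => i ≤ j) (x ∘ σ)
  calc ∑ j ∈ {j | i ≤ j}, x (σ j) = ∑ k, x k - ∑ j ∈ {j | j < i}, x (σ j) :=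
        eq_sub_of_add_eq htotal
    _ ≤ ∑ k, x k - ∑ k ∈ A, x k := sub_le_sub_left hhead _
    _ = ∑ k ∈ Aᶜ, x k := (eq_sub_of_add_eq (sum_compl_add_sum A x)).symm

theorem pow_le_inv_mul_rpow_neg_logb_inv {α q y : ℝ} {T : ℕ} (hα0 : 0 < α) (hα1 : α < 1)
    (hq : 1 < q) (hy : 0 < y) (hyT : y ≤ q ^ (T + 1)) :
    α ^ T ≤ α⁻¹ * y ^ (-Real.logb q α⁻¹) := by
  have hlog : Real.logb q y ≤ ((T + 1 : ℕ) : ℝ) := by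
    rwa [Real.logb_le_iff_le_rpow hq hy, Real.rpow_natCast]
  have hswap : y ^ (-Real.logb q α⁻¹) = α ^ Real.logb q y := by
    rw [Real.logb_inv, neg_neg, Real.rpow_def_of_pos hy, Real.rpow_def_of_pos hα0, Real.logb,
      Real.logb]
    ring_nf
  calc α ^ T = α⁻¹ * α ^ ((T + 1 : ℕ) : ℝ) := by
        rw [Real.rpow_natCast, pow_succ', inv_mul_cancel_left₀ hα0.ne']
    _ ≤ α⁻¹ * α ^ Real.logb q y :=
        mul_le_mul_of_nonneg_left (Real.rpow_le_rpow_of_exponent_ge hα0 hα1.le hlog)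
          (inv_nonneg.2 hα0.le)
    _ = α⁻¹ * y ^ (-Real.logb q α⁻¹) := by rw [hswap]

theorem pagerank_tail_decay {N : ℕ} (P : Matrix (Fin N) (Fin N) ℝ) (q : ℕ) (α : ℝ)
    (hP0 : ∀ i j, 0 ≤ P i j) (hP1 : ∀ j, ∑ i, P i j = 1)
    (hq : 2 ≤ q)
    (hsparse : ∀ j, (Finset.univ.filter fun i => P i j ≠ 0).card ≤ q)
    (hα0 : 0 < α) (hα1 : α < 1) (r : Fin N)
    (x : Fin N → ℝ)
    (hx : x = α • P.mulVec x + (1 - α) • (Pi.single r 1 : Fin N → ℝ))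
    (σ : Equiv.Perm (Fin N))
    (hσ : ∀ j k : Fin N, j ≤ k → x (σ k) ≤ x (σ j)) :
    ∀ i : Fin N,
      ∑ j ∈ Finset.univ.filter (fun j : Fin N => i ≤ j), x (σ j)
        ≤ α⁻¹ * (((i : ℕ) : ℝ) + 1) ^ (-(Real.logb q α⁻¹)) := by
  intro i
  have hP : P ∈ colStochastic ℝ (Fin N) := mem_colStochastic_iff_sum.2 ⟨hP0, hP1⟩
  have hb : 0 ≤ (1 - α) • (Pi.single r 1 : Fin N → ℝ) :=
    smul_nonneg (by linarith) (Pi.single_nonneg.2 zero_le_one)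
  have hx0 := nonneg_of_eq_smul_mulVec_add hP hα0.le hα1 hb hx
  have hsum : ∑ k, x k = 1 := by
    have := sum_eq_of_eq_smul_mulVec_add hP hx
    simp only [Pi.smul_apply, smul_eq_mul, ← mul_sum, sum_pi_single', mem_univ, if_true,
      mul_one] at this
    exact (mul_eq_left₀ (by linarith)).1 this
  set T := Nat.log q (i + 1)
  obtain ⟨A, hA, hAc⟩ :=
    exists_card_le_sum_compl_le_of_eq_smul_mulVec_add hP hsparse hα0.le hx0 hx T
  have hsupp : #{k | ((1 - α) • (Pi.single r 1 : Fin N → ℝ)) k ≠ 0} ≤ 1 :=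
    card_le_one.2 fun a ha c hc => by
      simp only [mem_filter, Pi.smul_apply, Pi.single_apply, smul_eq_mul] at ha hc
      grind
  have hgeom : ∑ s ∈ range T, q ^ s ≤ i :=
    Nat.lt_succ_iff.1 ((Nat.geomSum_lt hq fun s hs => mem_range.1 hs).trans_le
      (Nat.pow_log_le_self q (Nat.succ_ne_zero _)))
  have hAi : #A ≤ #{j | j < i} := by
    rw [filter_gt_eq_Iio, Fin.card_Iio]
    exact hA.trans ((Nat.mul_le_mul_left _ hsupp).trans (by simpa using hgeom))
  calc ∑ j ∈ {j | i ≤ j}, x (σ j) ≤ ∑ k ∈ Aᶜ, x k :=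
        sum_filter_le_le_sum_compl_of_antitone hx0 (fun j k hjk => hσ j k hjk) hAi
    _ ≤ α ^ T * ∑ k, x k := hAc
    _ = α ^ T := by rw [hsum, mul_one]
    _ ≤ α⁻¹ * (((i : ℕ) : ℝ) + 1) ^ (-(Real.logb q α⁻¹)) :=
        pow_le_inv_mul_rpow_neg_logb_inv hα0 hα1 (by exact_mod_cast hq) (by positivity)
          (by exact_mod_cast (Nat.lt_pow_succ_log_self hq _).le)
end

section
/- Let v ∈ ℂ^N and let Z be any random vector with ‖Z‖₀ ≤ m almost surely and EZ = v. Write N_i = 1{Z_i ≠ 0}. Then E‖Z - v‖² ≥ ∑_{i=1}^N |v_i|² (1/E[N_i] - 1), with equality when Z_i = v_i N_i / E[N_i]. -/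
open MeasureTheory BigOperators
open scoped Classical

/-!
Fix a coordinate, write `f = Z_i`, `N = 1{f ≠ 0}` and `p = 𝔼 N`. The variable `g = (N / p) • v` is
`𝔼[f | N]`, so `𝔼‖f - v‖² = 𝔼‖f - g‖² + 𝔼‖g - v‖²`, and `𝔼‖g - v‖² = ‖v‖² (1 / p - 1)`. Dropping the
first term gives the bound, and it vanishes exactly when `f = g` almost surely.
-/

lemma memLp_two_apply_of_integrable_sum_sq_norm {Ω ι E : Type*} [MeasurableSpace Ω]
    {μ : Measure Ω} [Fintype ι] [NormedAddCommGroup E] {Z : Ω → ι → E}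
    (hmeas : ∀ i, AEStronglyMeasurable (fun ω => Z ω i) μ)
    (hint : Integrable (fun ω => ∑ i, ‖Z ω i‖ ^ 2) μ) (i : ι) :
    MemLp (fun ω => Z ω i) 2 μ :=
  (memLp_two_iff_integrable_sq_norm (hmeas i)).2 <|
    hint.mono' ((hmeas i).norm.pow 2) <| .of_forall fun ω => by
      simpa using Finset.single_le_sum (f := fun j => ‖Z ω j‖ ^ 2)
        (fun j _ => sq_nonneg _) (Finset.mem_univ i)

section Decomposition

variable {Ω E : Type*} [MeasurableSpace Ω] {μ : Measure Ω} [NormedAddCommGroup E] {f : Ω → E}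

lemma integrable_ite_ne_zero [IsFiniteMeasure μ] (hf : AEStronglyMeasurable f μ) :
    Integrable (fun ω => if f ω ≠ 0 then (1 : ℝ) else 0) μ := by
  have hs : NullMeasurableSet {ω | f ω ≠ 0} μ :=
    (hf.nullMeasurableSet_eq_fun aestronglyMeasurable_const).compl
  refine ((integrable_const (1 : ℝ)).indicator₀ hs).congr (.of_forall fun ω => ?_)
  simp [Set.indicator_apply]

lemma integrable_norm_sub_const_sq [IsFiniteMeasure μ] (hf : MemLp f 2 μ) (c : E) :
    Integrable (fun ω => ‖f ω - c‖ ^ 2) μ :=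
  (memLp_two_iff_integrable_sq_norm (hf.1.sub aestronglyMeasurable_const)).1
    (hf.sub (memLp_const c))

variable [InnerProductSpace ℝ E]

lemma integral_norm_sub_const_sq [CompleteSpace E] [IsProbabilityMeasure μ] (hf : MemLp f 2 μ)
    (c : E) :
    ∫ ω, ‖f ω - c‖ ^ 2 ∂μ = ∫ ω, ‖f ω‖ ^ 2 ∂μ - 2 * inner ℝ (∫ ω, f ω ∂μ) c + ‖c‖ ^ 2 := by
  have hsq : Integrable (fun ω => ‖f ω‖ ^ 2) μ := (memLp_two_iff_integrable_sq_norm hf.1).1 hf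
  have hinner : Integrable (fun ω => 2 * inner ℝ (f ω) c) μ := by
    simpa only [real_inner_comm] using
      ((hf.integrable one_le_two).inner_const (𝕜 := ℝ) c).const_mul (2 : ℝ)
  have hdiff : Integrable (fun ω => ‖f ω‖ ^ 2 - 2 * inner ℝ (f ω) c) μ := hsq.sub hinner
  simp_rw [norm_sub_sq_real]
  rw [integral_add hdiff (integrable_const _), integral_sub hsq hinner,
    integral_const_mul, integral_const, probReal_univ, one_smul]
  simp_rw [real_inner_comm c, integral_inner (hf.integrable one_le_two)]

lemma norm_sub_ite_ne_zero_smul_sq (x c : E) :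
    ‖x - (if x ≠ 0 then (1 : ℝ) else 0) • c‖ ^ 2
      = ‖x - c‖ ^ 2 - (1 - if x ≠ 0 then 1 else 0) * ‖c‖ ^ 2 := by
  by_cases hx : x = 0 <;> simp [hx]

lemma integral_norm_sub_ite_ne_zero_smul_sq [IsProbabilityMeasure μ] (hf : MemLp f 2 μ) {p : ℝ}
    (hp : ∫ ω, (if f ω ≠ 0 then (1 : ℝ) else 0) ∂μ = p) (c : E) :
    ∫ ω, ‖f ω - (if f ω ≠ 0 then (1 : ℝ) else 0) • c‖ ^ 2 ∂μ
      = ∫ ω, ‖f ω - c‖ ^ 2 ∂μ - (1 - p) * ‖c‖ ^ 2 := by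
  have hN := integrable_ite_ne_zero hf.1
  have hcompl : Integrable (fun ω => (1 - if f ω ≠ 0 then (1 : ℝ) else 0) * ‖c‖ ^ 2) μ :=
    ((integrable_const 1).sub hN).mul_const _
  simp_rw [norm_sub_ite_ne_zero_smul_sq]
  rw [integral_sub (integrable_norm_sub_const_sq hf c) hcompl, integral_mul_const,
    integral_sub (integrable_const 1) hN, integral_const, hp]
  simp

theorem integral_norm_sub_integral_sq_eq [CompleteSpace E] [IsProbabilityMeasure μ]
    (hf : MemLp f 2 μ) {v : E} (hv : ∫ ω, f ω ∂μ = v) {p : ℝ}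
    (hp : ∫ ω, (if f ω ≠ 0 then (1 : ℝ) else 0) ∂μ = p) :
    ∫ ω, ‖f ω - v‖ ^ 2 ∂μ
      = ∫ ω, ‖f ω - ((if f ω ≠ 0 then (1 : ℝ) else 0) / p) • v‖ ^ 2 ∂μ
        + ‖v‖ ^ 2 * (1 / p - 1) := by
  simp_rw [div_eq_mul_inv _ p, mul_smul]
  rw [integral_norm_sub_ite_ne_zero_smul_sq hf hp, integral_norm_sub_const_sq hf,
    integral_norm_sub_const_sq hf, hv, real_inner_smul_right, real_inner_self_eq_norm_sq,
    norm_smul, Real.norm_eq_abs, mul_pow, sq_abs]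
  rcases eq_or_ne p 0 with rfl | hp0
  · ring
  · field_simp
    ring

theorem norm_sq_mul_one_div_sub_one_le_integral_norm_sub_sq [CompleteSpace E] [IsProbabilityMeasure μ]
    (hf : MemLp f 2 μ) {v : E} (hv : ∫ ω, f ω ∂μ = v) {p : ℝ}
    (hp : ∫ ω, (if f ω ≠ 0 then (1 : ℝ) else 0) ∂μ = p) :
    ‖v‖ ^ 2 * (1 / p - 1) ≤ ∫ ω, ‖f ω - v‖ ^ 2 ∂μ := by
  rw [integral_norm_sub_integral_sq_eq hf hv hp]
  exact le_add_of_nonneg_left (integral_nonneg fun ω => sq_nonneg _)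

theorem integral_norm_sub_sq_eq_of_ae_eq [CompleteSpace E] [IsProbabilityMeasure μ]
    (hf : MemLp f 2 μ) {v : E} (hv : ∫ ω, f ω ∂μ = v) {p : ℝ}
    (hp : ∫ ω, (if f ω ≠ 0 then (1 : ℝ) else 0) ∂μ = p)
    (heq : ∀ᵐ ω ∂μ, f ω = ((if f ω ≠ 0 then (1 : ℝ) else 0) / p) • v) :
    ∫ ω, ‖f ω - v‖ ^ 2 ∂μ = ‖v‖ ^ 2 * (1 / p - 1) := by
  rw [integral_norm_sub_integral_sq_eq hf hv hp, integral_eq_zero_of_ae, zero_add]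
  filter_upwards [heq] with ω hω
  rw [← hω, sub_self, norm_zero, zero_pow two_ne_zero, Pi.zero_apply]

end Decomposition

theorem sparse_unbiased_variance_lower_bound_general {N : ℕ} {Ω : Type*} [MeasurableSpace Ω]
    (μ : Measure Ω) [IsProbabilityMeasure μ]
    (v : Fin N → ℂ) (Z : Ω → Fin N → ℂ)
    (hmeas : ∀ i, AEMeasurable (fun ω => Z ω i) μ)
    (hint2 : Integrable (fun ω => ∑ i, ‖Z ω i‖ ^ 2) μ)
    (hunbiased : ∀ i, ∫ ω, Z ω i ∂μ = v i) :
    (∑ i, ‖v i‖ ^ 2 *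
        (1 / (∫ ω, (if Z ω i ≠ 0 then (1 : ℝ) else 0) ∂μ) - 1))
      ≤ ∫ ω, ∑ i, ‖Z ω i - v i‖ ^ 2 ∂μ ∧
    ((∀ᵐ ω ∂μ, ∀ i, Z ω i = v i * (if Z ω i ≠ 0 then (1 : ℂ) else 0) /
          ((∫ ω', (if Z ω' i ≠ 0 then (1 : ℝ) else 0) ∂μ : ℝ) : ℂ)) →
      (∑ i, ‖v i‖ ^ 2 *
          (1 / (∫ ω, (if Z ω i ≠ 0 then (1 : ℝ) else 0) ∂μ) - 1))
        = ∫ ω, ∑ i, ‖Z ω i - v i‖ ^ 2 ∂μ) := by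
  have hZ := memLp_two_apply_of_integrable_sum_sq_norm (fun i => (hmeas i).aestronglyMeasurable)
    hint2
  rw [integral_finsetSum _ fun i _ => integrable_norm_sub_const_sq (hZ i) (v i)]
  refine ⟨Finset.sum_le_sum fun i _ =>
    norm_sq_mul_one_div_sub_one_le_integral_norm_sub_sq (hZ i) (hunbiased i) rfl,
    fun heq => Finset.sum_congr rfl fun i _ =>
      (integral_norm_sub_sq_eq_of_ae_eq (hZ i) (hunbiased i) rfl ?_).symm⟩
  filter_upwards [heq] with ω hω
  conv_lhs => rw [hω i]
  split_ifs <;> simp [Complex.real_smul, div_eq_mul_inv, mul_comm]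

theorem sparse_unbiased_variance_lower_bound {N m : ℕ} {Ω : Type*} [MeasurableSpace Ω]
    (μ : Measure Ω) [IsProbabilityMeasure μ]
    (v : Fin N → ℂ) (Z : Ω → Fin N → ℂ)
    (hmeas : ∀ i, AEMeasurable (fun ω => Z ω i) μ)
    (hint1 : ∀ i, Integrable (fun ω => Z ω i) μ)
    (hint2 : Integrable (fun ω => ∑ i, ‖Z ω i‖ ^ 2) μ)
    (hsparse : ∀ᵐ ω ∂μ, (Finset.univ.filter fun i => Z ω i ≠ 0).card ≤ m)
    (hunbiased : ∀ i, ∫ ω, Z ω i ∂μ = v i) :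
    (∑ i, ‖v i‖ ^ 2 *
        (1 / (∫ ω, (if Z ω i ≠ 0 then (1 : ℝ) else 0) ∂μ) - 1))
      ≤ ∫ ω, ∑ i, ‖Z ω i - v i‖ ^ 2 ∂μ ∧
    ((∀ᵐ ω ∂μ, ∀ i, Z ω i = v i * (if Z ω i ≠ 0 then (1 : ℂ) else 0) /
          ((∫ ω', (if Z ω' i ≠ 0 then (1 : ℝ) else 0) ∂μ : ℝ) : ℂ)) →
      (∑ i, ‖v i‖ ^ 2 *
          (1 / (∫ ω, (if Z ω i ≠ 0 then (1 : ℝ) else 0) ∂μ) - 1))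
        = ∫ ω, ∑ i, ‖Z ω i - v i‖ ^ 2 ∂μ) :=
  sparse_unbiased_variance_lower_bound_general μ v Z hmeas hint2 hunbiased
end

section
/- Fix v ∈ ℂ^N with entries sorted so |v_1| ≥ |v_2| ≥ ⋯ ≥ |v_N|, and a positive integer m ≤ N. Define f(q) = (1/(m-q))(∑_{i=q+1}^N |v_i|)² - ∑_{i=q+1}^N |v_i|² for integers 0 ≤ q < m. Then f(q+1) - f(q) = ((m-q)/(m-q-1)) · ((1/(m-q)) ∑_{i=q+1}^N |v_i| - |v_{q+1}|)² ≥ 0; in particular, f is nondecreasing in q. -/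
open BigOperators

/-- Tail sum of absolute values: entries with (0-based) index `≥ q`. -/
noncomputable def tailAbs {N : ℕ} (v : Fin N → ℂ) (q : ℕ) : ℝ :=
  ∑ i ∈ Finset.univ.filter (fun i : Fin N => q ≤ (i : ℕ)), ‖v i‖

/-- Tail sum of squared absolute values. -/
noncomputable def tailSq {N : ℕ} (v : Fin N → ℂ) (q : ℕ) : ℝ :=
  ∑ i ∈ Finset.univ.filter (fun i : Fin N => q ≤ (i : ℕ)), ‖v i‖ ^ 2

/-- The optimal-variance objective when the `q` largest entries are preserved exactly. -/
noncomputable def fObj {N : ℕ} (v : Fin N → ℂ) (m q : ℕ) : ℝ :=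
  1 / ((m : ℝ) - q) * (tailAbs v q) ^ 2 - tailSq v q

/-!
Moving the entry `x = |v_{q+1}|` out of a tail with sum `a`, square sum `s` and budget `t = m - q`
changes `a² / t - s` into `(a - x)² / (t - 1) - (s - x²)`; clearing denominators, the difference
is `(a - t x)² / (t (t - 1))`, a square with a positive factor as long as `t ≥ 2`. Monotonicity
then follows step by step.
-/

theorem Fin.sum_filter_le_eq_add_sum_filter_succ_le {M : Type*} [AddCommMonoid M] {N : ℕ}
    (g : Fin N → M) (q : ℕ) (hq : q < N) :
    ∑ i ∈ Finset.univ.filter (fun i : Fin N => q ≤ (i : ℕ)), g i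
      = g ⟨q, hq⟩ + ∑ i ∈ Finset.univ.filter (fun i : Fin N => q + 1 ≤ (i : ℕ)), g i := by
  have hsplit : Finset.univ.filter (fun i : Fin N => q ≤ (i : ℕ))
      = insert ⟨q, hq⟩ (Finset.univ.filter (fun i : Fin N => q + 1 ≤ (i : ℕ))) := by
    ext i
    simp only [Finset.mem_filter, Finset.mem_univ, true_and, Finset.mem_insert, Fin.ext_iff]
    omega
  rw [hsplit, Finset.sum_insert (by simp)]

theorem one_div_sub_one_mul_sq_sub_sub_one_div_mul_sq_sub {t : ℝ} (ht : t ≠ 0) (ht1 : t - 1 ≠ 0)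
    (a x s : ℝ) :
    (1 / (t - 1) * (a - x) ^ 2 - s) - (1 / t * a ^ 2 - (x ^ 2 + s))
      = t / (t - 1) * (1 / t * a - x) ^ 2 := by
  field_simp
  ring

theorem fObj_succ_sub_fObj {N m q : ℕ} (v : Fin N → ℂ) (hqm : q + 1 < m) (hqN : q < N) :
    fObj v m (q + 1) - fObj v m q
      = ((m : ℝ) - q) / ((m : ℝ) - q - 1) *
          (1 / ((m : ℝ) - q) * tailAbs v q - ‖v ⟨q, hqN⟩‖) ^ 2 := by
  have hAbs : tailAbs v (q + 1) = tailAbs v q - ‖v ⟨q, hqN⟩‖ := by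
    rw [tailAbs, tailAbs, Fin.sum_filter_le_eq_add_sum_filter_succ_le (fun i => ‖v i‖) q hqN]
    ring
  have hSq : tailSq v q = ‖v ⟨q, hqN⟩‖ ^ 2 + tailSq v (q + 1) :=
    Fin.sum_filter_le_eq_add_sum_filter_succ_le (fun i => ‖v i‖ ^ 2) q hqN
  have hbudget : (q : ℝ) + 2 ≤ m := by exact_mod_cast hqm
  have hsucc : (m : ℝ) - ((q + 1 : ℕ) : ℝ) = (m : ℝ) - q - 1 := by push_cast; ring
  rw [← one_div_sub_one_mul_sq_sub_sub_one_div_mul_sq_sub (by linarith) (by linarith),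
    fObj, fObj, hsucc, hAbs, hSq]

theorem fObj_le_fObj_succ {N m q : ℕ} (v : Fin N → ℂ) (hqm : q + 1 < m) (hqN : q < N) :
    fObj v m q ≤ fObj v m (q + 1) := by
  have hbudget : (q : ℝ) + 1 < m := by exact_mod_cast hqm
  rw [← sub_nonneg, fObj_succ_sub_fObj v hqm hqN]
  exact mul_nonneg (div_nonneg (by linarith) (by linarith)) (sq_nonneg _)

theorem fObj_monotoneOn {N m : ℕ} (v : Fin N → ℂ) (hmN : m ≤ N) :
    MonotoneOn (fObj v m) (Set.Iio m) :=
  monotoneOn_of_le_succ Set.ordConnected_Iio fun q _ _ hq => by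
    rw [Order.succ_eq_add_one] at hq ⊢
    exact fObj_le_fObj_succ v hq (by simp at hq; omega)

theorem fObj_increment_nonneg {N m : ℕ} (v : Fin N → ℂ)
    (hmN : m ≤ N) :
    (∀ q : ℕ, ∀ hq : q + 1 < m,
      fObj v m (q + 1) - fObj v m q
          = ((m : ℝ) - q) / ((m : ℝ) - q - 1) *
              (1 / ((m : ℝ) - q) * tailAbs v q
                - ‖v ⟨q, by omega⟩‖) ^ 2 ∧
      0 ≤ fObj v m (q + 1) - fObj v m q) ∧
    (∀ q q' : ℕ, q ≤ q' → q' < m → fObj v m q ≤ fObj v m q') :=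
  ⟨fun q hq => ⟨fObj_succ_sub_fObj v hq (by omega),
      sub_nonneg.mpr (fObj_le_fObj_succ v hq (by omega))⟩,
    fun q q' hqq' hq' => fObj_monotoneOn v hmN (lt_of_le_of_lt hqq' hq') hq' hqq'⟩
end

section
/- Let v ∈ ℂ^N and let Φ(v) be an unbiased m-sparse random sparsification of v whose entry selections are negatively correlated (P{i,j both selected} ≤ p_i p_j) and whose optimal-probability L² error satisfies E‖Φ(v) - v‖² ≤ min_{i≤m} (1/(m-i))(∑_{j>i}|v↓_j|)². Then for every f ∈ ℂ^N with ‖f‖_∞ ≤ 1, E|f*(Φ(v) - v)|² ≤ 2·min_{i≤m}(1/(m-i))(∑_{j>i}|v↓_j|)², i.e., the triple-norm squared error is at most twice the optimal L² error. -/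
/-!
With `A_j` the event that entry `j` is selected, `Φ_j - v_j = v_j g_j` almost surely, where
`g_j = 1_{A_j} / p_j - 1` (`indicatorDeviation`). Since `E[g_j g_k] = μ(A_j ∩ A_k) / (p_j p_k) - 1`,
negative correlation of the selections makes the `g_j` pairwise negatively correlated, so for
nonnegative coefficients the cross terms of `E (∑ a_j g_j)²` can be dropped. A real coefficient
vector is the difference of its positive and negative parts, which costs the factor `2`; the real
and imaginary parts of `f̄_j v_j` are treated separately and recombine to `|f̄_j v_j|² ≤ |v_j|²`.
What remains is `2 ∑ |v_j|² E g_j² = 2 E ‖Φ(v) - v‖²`.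
-/

open MeasureTheory BigOperators

section

variable {Ω : Type*} [MeasurableSpace Ω] {μ : Measure Ω} {ι : Type*} [Fintype ι] {g : ι → Ω → ℝ}

lemma sum_sum_mul_le_sum_sq_mul_of_nonpos {G : ι → ι → ℝ} (hG : ∀ j k, j ≠ k → G j k ≤ 0)
    {a : ι → ℝ} (ha : ∀ j, 0 ≤ a j) :
    ∑ j, ∑ k, a j * a k * G j k ≤ ∑ j, a j ^ 2 * G j j := by
  classical
  refine Finset.sum_le_sum fun j _ => ?_
  rw [← Finset.add_sum_erase _ _ (Finset.mem_univ j), sq]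
  refine add_le_of_nonpos_right (Finset.sum_nonpos fun k hk => ?_)
  exact mul_nonpos_of_nonneg_of_nonpos (mul_nonneg (ha j) (ha k))
    (hG j k (Finset.ne_of_mem_erase hk).symm)

lemma integral_sum_mul_sq (hg : ∀ j, MemLp (g j) 2 μ) (a : ι → ℝ) :
    ∫ ω, (∑ j, a j * g j ω) ^ 2 ∂μ = ∑ j, ∑ k, a j * a k * ∫ ω, g j ω * g k ω ∂μ := by
  have hint : ∀ j k, Integrable (fun ω => g j ω * g k ω) μ :=
    fun j k => (hg j).integrable_mul (hg k)
  have hexpand : ∀ ω, (∑ j, a j * g j ω) ^ 2 = ∑ j, ∑ k, a j * a k * (g j ω * g k ω) :=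
    fun ω => by simp only [sq, Finset.sum_mul_sum, mul_mul_mul_comm]
  simp_rw [hexpand]
  rw [integral_finsetSum _ fun j _ => integrable_finsetSum _ fun k _ => (hint j k).const_mul _]
  refine Finset.sum_congr rfl fun j _ => ?_
  rw [integral_finsetSum _ fun k _ => (hint j k).const_mul _]
  exact Finset.sum_congr rfl fun k _ => integral_const_mul _ _

lemma integral_sum_mul_sq_le_of_nonneg (hg : ∀ j, MemLp (g j) 2 μ)
    (hcorr : ∀ j k, j ≠ k → ∫ ω, g j ω * g k ω ∂μ ≤ 0) {a : ι → ℝ} (ha : ∀ j, 0 ≤ a j) :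
    ∫ ω, (∑ j, a j * g j ω) ^ 2 ∂μ ≤ ∑ j, a j ^ 2 * ∫ ω, g j ω ^ 2 ∂μ := by
  simp_rw [integral_sum_mul_sq hg, sq (g _ _)]
  exact sum_sum_mul_le_sum_sq_mul_of_nonpos hcorr ha

lemma memLp_sum_mul (hg : ∀ j, MemLp (g j) 2 μ) (a : ι → ℝ) :
    MemLp (fun ω => ∑ j, a j * g j ω) 2 μ :=
  memLp_finsetSum _ fun j _ => (hg j).const_mul (a j)

lemma integral_sum_mul_sq_le_two_mul (hg : ∀ j, MemLp (g j) 2 μ)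
    (hcorr : ∀ j k, j ≠ k → ∫ ω, g j ω * g k ω ∂μ ≤ 0) (a : ι → ℝ) :
    ∫ ω, (∑ j, a j * g j ω) ^ 2 ∂μ ≤ 2 * ∑ j, a j ^ 2 * ∫ ω, g j ω ^ 2 ∂μ := by
  set X := fun ω => ∑ j, (a j)⁺ * g j ω
  set Y := fun ω => ∑ j, (a j)⁻ * g j ω
  have hXY : ∀ ω, ∑ j, a j * g j ω = X ω - Y ω := fun ω => by
    simp only [X, Y, ← Finset.sum_sub_distrib, ← sub_mul, posPart_sub_negPart]
  have hsq : ∀ j, (a j)⁺ ^ 2 + (a j)⁻ ^ 2 = a j ^ 2 := fun j => by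
    rcases le_total 0 (a j) with h | h <;> simp [h]
  have hX := (memLp_sum_mul hg fun j => (a j)⁺).integrable_sq
  have hY := (memLp_sum_mul hg fun j => (a j)⁻).integrable_sq
  calc ∫ ω, (∑ j, a j * g j ω) ^ 2 ∂μ ≤ ∫ ω, (2 * X ω ^ 2 + 2 * Y ω ^ 2) ∂μ := by
        refine integral_mono (memLp_sum_mul hg a).integrable_sq
          ((hX.const_mul 2).add (hY.const_mul 2)) fun ω => ?_
        simp only [hXY]
        linarith [sq_nonneg (X ω + Y ω)]
    _ = 2 * ∫ ω, X ω ^ 2 ∂μ + 2 * ∫ ω, Y ω ^ 2 ∂μ := by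
        rw [integral_add (hX.const_mul 2) (hY.const_mul 2), integral_const_mul, integral_const_mul]
    _ ≤ 2 * ∑ j, (a j)⁺ ^ 2 * ∫ ω, g j ω ^ 2 ∂μ + 2 * ∑ j, (a j)⁻ ^ 2 * ∫ ω, g j ω ^ 2 ∂μ := by
        gcongr
        · exact integral_sum_mul_sq_le_of_nonneg hg hcorr fun j => posPart_nonneg _
        · exact integral_sum_mul_sq_le_of_nonneg hg hcorr fun j => negPart_nonneg _
    _ = 2 * ∑ j, a j ^ 2 * ∫ ω, g j ω ^ 2 ∂μ := by
        simp only [← mul_add, ← Finset.sum_add_distrib, ← add_mul, hsq]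

lemma integral_norm_sum_mul_sq_le_two_mul (hg : ∀ j, MemLp (g j) 2 μ)
    (hcorr : ∀ j k, j ≠ k → ∫ ω, g j ω * g k ω ∂μ ≤ 0) (c : ι → ℂ) :
    ∫ ω, ‖∑ j, c j * g j ω‖ ^ 2 ∂μ ≤ 2 * ∑ j, ‖c j‖ ^ 2 * ∫ ω, g j ω ^ 2 ∂μ := by
  have hreim : ∀ ω, ‖∑ j, c j * g j ω‖ ^ 2
      = (∑ j, (c j).re * g j ω) ^ 2 + (∑ j, (c j).im * g j ω) ^ 2 := fun ω => by
    rw [Complex.sq_norm, Complex.normSq_apply, Complex.re_sum, Complex.im_sum]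
    simp only [Complex.re_mul_ofReal, Complex.im_mul_ofReal, sq]
  have hnorm : ∀ j, (c j).re ^ 2 + (c j).im ^ 2 = ‖c j‖ ^ 2 := fun j => by
    rw [Complex.sq_norm, Complex.normSq_apply, sq, sq]
  simp_rw [hreim]
  rw [integral_add (memLp_sum_mul hg _).integrable_sq (memLp_sum_mul hg _).integrable_sq]
  calc _ ≤ 2 * ∑ j, (c j).re ^ 2 * ∫ ω, g j ω ^ 2 ∂μ + 2 * ∑ j, (c j).im ^ 2 * ∫ ω, g j ω ^ 2 ∂μ :=
        add_le_add (integral_sum_mul_sq_le_two_mul hg hcorr _)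
          (integral_sum_mul_sq_le_two_mul hg hcorr _)
    _ = 2 * ∑ j, ‖c j‖ ^ 2 * ∫ ω, g j ω ^ 2 ∂μ := by
        simp only [← mul_add, ← Finset.sum_add_distrib, ← add_mul, hnorm]

lemma integral_sum_norm_mul_sq (hg : ∀ j, MemLp (g j) 2 μ) (c : ι → ℂ) :
    ∫ ω, ∑ j, ‖c j * g j ω‖ ^ 2 ∂μ = ∑ j, ‖c j‖ ^ 2 * ∫ ω, g j ω ^ 2 ∂μ := by
  simp_rw [norm_mul, Complex.norm_real, Real.norm_eq_abs, mul_pow, sq_abs]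
  rw [integral_finsetSum _ fun j _ => (hg j).integrable_sq.const_mul _]
  simp_rw [integral_const_mul]

end

section

variable {Ω : Type*}

noncomputable def indicatorDeviation (A : Set Ω) (p : ℝ) (ω : Ω) : ℝ :=
  A.indicator 1 ω / p - 1

lemma sub_eq_mul_indicatorDeviation {φ : Ω → ℂ} {w : ℂ} {p : ℝ} {ω : Ω}
    (h : φ ω = w / p ∨ φ ω = 0) :
    φ ω - w = w * indicatorDeviation {ω | φ ω ≠ 0} p ω := by
  by_cases hω : φ ω = 0
  · simp [indicatorDeviation, hω]
  · rw [indicatorDeviation, Set.indicator_of_mem hω, Pi.one_apply, h.resolve_right hω]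
    push_cast
    ring

variable [MeasurableSpace Ω] {μ : Measure Ω} {A B : Set Ω}

lemma memLp_indicatorDeviation [IsFiniteMeasure μ] (hA : NullMeasurableSet A μ) (p : ℝ)
    (q : ENNReal) : MemLp (indicatorDeviation A p) q μ := by
  refine MemLp.of_bound ?_ (|p|⁻¹ + 1) (ae_of_all _ fun ω => (norm_sub_le _ _).trans ?_)
  · exact ((aemeasurable_const.indicator₀ hA).div_const p |>.sub_const 1).aestronglyMeasurable
  · by_cases hω : ω ∈ A <;> simp [hω]

lemma integral_indicator_one₀ [IsFiniteMeasure μ] (hA : NullMeasurableSet A μ) :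
    ∫ ω, A.indicator 1 ω ∂μ = μ.real A := by
  rw [integral_indicator₀ hA, Pi.one_def, setIntegral_const, smul_eq_mul, mul_one]

lemma integral_indicatorDeviation_mul_nonpos [IsProbabilityMeasure μ]
    (hA : NullMeasurableSet A μ) (hB : NullMeasurableSet B μ) {p q : ℝ} (hp : 0 < p) (hq : 0 < q)
    (hμA : μ A = ENNReal.ofReal p) (hμB : μ B = ENNReal.ofReal q)
    (hAB : μ (A ∩ B) ≤ ENNReal.ofReal (p * q)) :
    ∫ ω, indicatorDeviation A p ω * indicatorDeviation B q ω ∂μ ≤ 0 := by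
  have hμA' : μ.real A = p := by rw [measureReal_def, hμA, ENNReal.toReal_ofReal hp.le]
  have hμB' : μ.real B = q := by rw [measureReal_def, hμB, ENNReal.toReal_ofReal hq.le]
  have hAB' : μ.real (A ∩ B) ≤ p * q :=
    ENNReal.toReal_le_of_le_ofReal (mul_pos hp hq).le hAB
  have hexpand : ∀ ω, indicatorDeviation A p ω * indicatorDeviation B q ω
      = (A ∩ B).indicator 1 ω / (p * q) - A.indicator 1 ω / p - B.indicator 1 ω / q + 1 :=
    fun ω => by simp only [indicatorDeviation, Set.inter_indicator_one, Pi.mul_apply]; ring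
  have hint : ∀ {s : Set Ω}, NullMeasurableSet s μ → ∀ r : ℝ,
      Integrable (fun ω => s.indicator 1 ω / r) μ :=
    fun hs r => ((integrable_const 1).indicator₀ hs).div_const r
  simp_rw [hexpand]
  -- the integral is `μ(A ∩ B) / (p q) - 1`
  rw [integral_add ?_ (integrable_const 1), integral_sub ?_ (hint hB q),
    integral_sub (hint (hA.inter hB) _) (hint hA _), integral_div, integral_div, integral_div,
    integral_indicator_one₀ hA, integral_indicator_one₀ hB, integral_indicator_one₀ (hA.inter hB),
    hμA', hμB', integral_const, probReal_univ, one_smul, div_self hp.ne', div_self hq.ne']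
  · linarith [(div_le_one (mul_pos hp hq)).2 hAB']
  · exact (hint (hA.inter hB) _).sub (hint hA _)
  · exact ((hint (hA.inter hB) _).sub (hint hA _)).sub (hint hB _)

end

theorem pivotal_triple_norm_near_optimal_general {N m : ℕ} {Ω : Type*} [MeasurableSpace Ω]
    (μ : Measure Ω) [IsProbabilityMeasure μ]
    (v : Fin N → ℂ)
    (Φ : Ω → Fin N → ℂ)
    (hmeas : ∀ i, AEMeasurable (fun ω => Φ ω i) μ)
    (p : Fin N → ℝ)
    (hp : ∀ i, 0 < p i ∧ p i ≤ 1)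
    (hform : ∀ᵐ ω ∂μ, ∀ i, Φ ω i = v i / (p i : ℂ) ∨ Φ ω i = 0)
    (hprob : ∀ i, μ {ω | Φ ω i ≠ 0} = ENNReal.ofReal (p i))
    (hneg : ∀ i j, i ≠ j →
      μ ({ω | Φ ω i ≠ 0} ∩ {ω | Φ ω j ≠ 0}) ≤ ENNReal.ofReal (p i * p j))
    (hL2 : ∀ i < m, (∫ ω, ∑ j, ‖Φ ω j - v j‖ ^ 2 ∂μ)
      ≤ 1 / ((m : ℝ) - i) * (tailAbs v i) ^ 2) :
    ∀ f : Fin N → ℂ, (∀ i, ‖f i‖ ≤ 1) →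
      ∀ i < m,
        (∫ ω, ‖∑ j, (starRingEnd ℂ) (f j) * (Φ ω j - v j)‖ ^ 2 ∂μ)
          ≤ 2 * (1 / ((m : ℝ) - i) * (tailAbs v i) ^ 2) := by
  intro f hf i hi
  set g := fun j => indicatorDeviation {ω | Φ ω j ≠ 0} (p j)
  have hselected : ∀ j, NullMeasurableSet {ω | Φ ω j ≠ 0} μ :=
    fun j => (hmeas j).nullMeasurableSet_preimage (measurableSet_singleton 0).compl
  have hg : ∀ j, MemLp (g j) 2 μ := fun j => memLp_indicatorDeviation (hselected j) _ _
  have hcorr : ∀ j k, j ≠ k → ∫ ω, g j ω * g k ω ∂μ ≤ 0 := fun j k hjk =>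
    integral_indicatorDeviation_mul_nonpos (hselected j) (hselected k) (hp j).1 (hp k).1
      (hprob j) (hprob k) (hneg j k hjk)
  have hdev : ∀ᵐ ω ∂μ, ∀ j, Φ ω j - v j = v j * g j ω :=
    hform.mono fun ω h j => sub_eq_mul_indicatorDeviation (h j)
  calc ∫ ω, ‖∑ j, (starRingEnd ℂ) (f j) * (Φ ω j - v j)‖ ^ 2 ∂μ
      = ∫ ω, ‖∑ j, (starRingEnd ℂ) (f j) * v j * g j ω‖ ^ 2 ∂μ :=
        integral_congr_ae (hdev.mono fun ω h => by simp_rw [h, mul_assoc])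
    _ ≤ 2 * ∑ j, ‖(starRingEnd ℂ) (f j) * v j‖ ^ 2 * ∫ ω, g j ω ^ 2 ∂μ :=
        integral_norm_sum_mul_sq_le_two_mul hg hcorr _
    _ ≤ 2 * ∑ j, ‖v j‖ ^ 2 * ∫ ω, g j ω ^ 2 ∂μ := by
        gcongr with j
        rw [norm_mul, Complex.norm_conj]
        exact mul_le_of_le_one_left (norm_nonneg _) (hf j)
    _ = 2 * ∫ ω, ∑ j, ‖Φ ω j - v j‖ ^ 2 ∂μ := by
        rw [← integral_sum_norm_mul_sq hg]
        exact congrArg _ (integral_congr_ae (hdev.mono fun ω h => by simp_rw [h]))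
    _ ≤ 2 * (1 / ((m : ℝ) - i) * (tailAbs v i) ^ 2) :=
        mul_le_mul_of_nonneg_left (hL2 i hi) zero_le_two

theorem pivotal_triple_norm_near_optimal {N m : ℕ} {Ω : Type*} [MeasurableSpace Ω]
    (μ : Measure Ω) [IsProbabilityMeasure μ]
    (v : Fin N → ℂ)
    (hsort : ∀ j k : Fin N, j ≤ k → ‖v k‖ ≤ ‖v j‖)
    (Φ : Ω → Fin N → ℂ)
    (hmeas : ∀ i, AEMeasurable (fun ω => Φ ω i) μ)
    (p : Fin N → ℝ)
    (hp : ∀ i, 0 < p i ∧ p i ≤ 1)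
    (hform : ∀ᵐ ω ∂μ, ∀ i, Φ ω i = v i / (p i : ℂ) ∨ Φ ω i = 0)
    (hprob : ∀ i, μ {ω | Φ ω i ≠ 0} = ENNReal.ofReal (p i))
    (hneg : ∀ i j, i ≠ j →
      μ ({ω | Φ ω i ≠ 0} ∩ {ω | Φ ω j ≠ 0}) ≤ ENNReal.ofReal (p i * p j))
    (hunbiased : ∀ i, ∫ ω, Φ ω i ∂μ = v i)
    (hL2 : ∀ i < m, (∫ ω, ∑ j, ‖Φ ω j - v j‖ ^ 2 ∂μ)
      ≤ 1 / ((m : ℝ) - i) * (tailAbs v i) ^ 2) :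
    ∀ f : Fin N → ℂ, (∀ i, ‖f i‖ ≤ 1) →
      ∀ i < m,
        (∫ ω, ‖∑ j, (starRingEnd ℂ) (f j) * (Φ ω j - v j)‖ ^ 2 ∂μ)
          ≤ 2 * (1 / ((m : ℝ) - i) * (tailAbs v i) ^ 2) :=
  pivotal_triple_norm_near_optimal_general μ v Φ hmeas p hp hform hprob hneg hL2
end
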